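/- Suppose Q > 0, A₁ + B₃ + Q = A₃ + B₁, A₂ + B₄ = A₄ + B₂, and set h′ = A₃ − A₄ − B₃ + B₄. Fix a real constant c′ and an integer m, and suppose h′·m ≤ A₄ − c′, (Q−h′)·m ≤ c′ − A₂, h′·(m+1) ≤ A₃ − c′, and (Q−h′)·(m+1) ≤ c′ − A₁. Then Y_m = h′·m + c′, Y_{m+1} = h′·(m+1) + c′, and Z_{m+1} = h′·m + c′ + B₄ − A₄ satisfy max(mQ + A₂, Y_m) + B₄ = Z_{m+1} + max(A₄, Y_m) and max((m+1)Q + A₁, Y_{m+1}) + B₃ = Z_{m+1} + max(A₃, Y_{m+1}). -/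

import Mathlib

/-! The inequalities say that on both sides of each equation the maximum is attained by a definite
argument: by the linear solution `Y` on the left and by the constant `A₄` resp. `A₃` on the right.
The equations thereby become linear identities, the second one being the definition of `h'`. -/

theorem max_add_eq_add_max_of_le {α : Type*} [LinearOrder α] [Add α] {p y a b z : α}
    (hp : p ≤ y) (ha : y ≤ a) (h : y + b = z + a) : max p y + b = z + max a y := by
  rwa [max_eq_right hp, max_eq_left ha]

theorem riccati_linear_solution_h'_general (Q A₁ A₂ A₃ A₄ B₃ B₄ c' : ℝ) (m : ℤ)
    (h' : ℝ) (hh' : h' = A₃ - A₄ - B₃ + B₄)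
    (i1 : h' * m ≤ A₄ - c') (i2 : (Q - h') * m ≤ c' - A₂)
    (i3 : h' * (m + 1) ≤ A₃ - c') (i4 : (Q - h') * (m + 1) ≤ c' - A₁) :
    (max ((m : ℝ) * Q + A₂) (h' * m + c') + B₄ =
        (h' * m + c' + B₄ - A₄) + max A₄ (h' * m + c')) ∧
    (max (((m : ℝ) + 1) * Q + A₁) (h' * (m + 1) + c') + B₃ =
        (h' * m + c' + B₄ - A₄) + max A₃ (h' * (m + 1) + c')) := by
  constructor
  · exact max_add_eq_add_max_of_le (by linarith) (by linarith) (by ring)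
  · exact max_add_eq_add_max_of_le (by linarith) (by linarith) (by rw [hh']; ring)

theorem riccati_linear_solution_h' (Q A₁ A₂ A₃ A₄ B₁ B₂ B₃ B₄ c' : ℝ) (m : ℤ)
    (hQ : 0 < Q) (h1 : A₁ + B₃ + Q = A₃ + B₁) (h2 : A₂ + B₄ = A₄ + B₂)
    (h' : ℝ) (hh' : h' = A₃ - A₄ - B₃ + B₄)
    (i1 : h' * m ≤ A₄ - c') (i2 : (Q - h') * m ≤ c' - A₂)
    (i3 : h' * (m + 1) ≤ A₃ - c') (i4 : (Q - h') * (m + 1) ≤ c' - A₁) :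
    (max ((m : ℝ) * Q + A₂) (h' * m + c') + B₄ =
        (h' * m + c' + B₄ - A₄) + max A₄ (h' * m + c')) ∧
    (max (((m : ℝ) + 1) * Q + A₁) (h' * (m + 1) + c') + B₃ =
        (h' * m + c' + B₄ - A₄) + max A₃ (h' * (m + 1) + c')) :=
  riccati_linear_solution_h'_general Q A₁ A₂ A₃ A₄ B₃ B₄ c' m h' hh' i1 i2 i3 i4
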